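/- Let 𝒳 be a metric space with a fixed base point o, and write ‖x‖ := d(x,o). Let β ≥ 1. Then there exists a constant C, depending only on β, such that for any four points x₁, x₂, x₃, x₄ ∈ 𝒳 (indices interpreted modulo 4), |d(x₁,x₂)^β − d(x₂,x₃)^β + d(x₃,x₄)^β − d(x₄,x₁)^β| ≤ C · Σ_{i=1}^{4} (‖x_i‖^{β−1}‖x_{i+1}‖ + ‖x_i‖^{β−1}‖x_{i−1}‖). -/
import Mathlib

open Real

private lemma lemA {x y β : ℝ} (hx : 0 ≤ x) (hxy : x ≤ y) (hβ : 1 ≤ β) :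
    y ^ β - x ^ β ≤ β * y ^ (β - 1) * (y - x) := by
  rcases eq_or_lt_of_le (hx.trans hxy) with hy | hy
  · have hx0 : x = 0 := le_antisymm (hxy.trans hy.symm.le) hx
    have hβ0 : β ≠ 0 := by linarith
    simp [← hy, hx0, Real.zero_rpow hβ0]
  · have hs : (-1 : ℝ) ≤ x / y - 1 := by
      have : 0 ≤ x / y := div_nonneg hx hy.le
      linarith
    have hber := one_add_mul_self_le_rpow_one_add hs hβ
    have h1 : 1 + (x / y - 1) = x / y := by ring
    rw [h1] at hber
    have hdiv : (x / y) ^ β = x ^ β / y ^ β := Real.div_rpow hx hy.le β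
    rw [hdiv] at hber
    have hyβ : (0 : ℝ) < y ^ β := Real.rpow_pos_of_pos hy β
    have hmul := mul_le_mul_of_nonneg_right hber hyβ.le
    rw [div_mul_cancel₀ _ (ne_of_gt hyβ)] at hmul
    have hpow : y ^ (β - 1) * y = y ^ β := by
      rw [← Real.rpow_add_one (ne_of_gt hy)]
      ring_nf
    have hxy' : x / y * y = x := div_mul_cancel₀ _ (ne_of_gt hy)
    -- hmul : (1 + β * (x/y - 1)) * y ^ β ≤ x ^ β
    have hexp : (1 + β * (x / y - 1)) * y ^ β = y ^ β + β * (x * (y ^ β / y) - y ^ β) := by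
      field_simp
    have hdivp : y ^ β / y = y ^ (β - 1) := by
      rw [← hpow, mul_div_assoc, div_self (ne_of_gt hy), mul_one]
    rw [hexp, hdivp] at hmul
    nlinarith [hmul]

private lemma keyAux {a b t β : ℝ} (hb : 0 ≤ b) (hba : b ≤ a)
    (h1 : |a - b| ≤ t) (h2 : t ≤ a + b) (hβ : 1 ≤ β) :
    |t ^ β - a ^ β - b ^ β| ≤ (β * 2 ^ (β - 1) + 1) * (a ^ (β - 1) * b + b ^ (β - 1) * a) := by
  have ha : 0 ≤ a := hb.trans hba
  have ht : 0 ≤ t := (abs_nonneg _).trans h1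
  have hβ1 : 0 ≤ β - 1 := by linarith
  have hβ0 : β ≠ 0 := by positivity
  have hA : 0 ≤ a ^ (β - 1) * b := mul_nonneg (Real.rpow_nonneg ha _) hb
  have hB : 0 ≤ b ^ (β - 1) * a := mul_nonneg (Real.rpow_nonneg hb _) ha
  have h2pow : (1 : ℝ) ≤ 2 ^ (β - 1) := Real.one_le_rpow (by norm_num) hβ1
  have hbβ : 0 ≤ b ^ β := Real.rpow_nonneg hb _
  -- b^β ≤ b^(β-1) * a
  have hbβa : b ^ β ≤ b ^ (β - 1) * a := by
    rcases eq_or_lt_of_le hb with hb0 | hb0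
    · rw [← hb0, Real.zero_rpow hβ0]
      positivity
    · have : b ^ β = b ^ (β - 1) * b := by
        rw [← Real.rpow_add_one (ne_of_gt hb0)]; ring_nf
      rw [this]
      exact mul_le_mul_of_nonneg_left hba (Real.rpow_nonneg hb _)
  -- upper bound
  have hup : t ^ β - a ^ β - b ^ β ≤ β * 2 ^ (β - 1) * (a ^ (β - 1) * b) := by
    have htab : t ^ β ≤ (a + b) ^ β := Real.rpow_le_rpow ht h2 (by linarith)
    have hA1 : (a + b) ^ β - a ^ β ≤ β * (a + b) ^ (β - 1) * b := by
      have := lemA ha (by linarith : a ≤ a + b) hβ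
      simpa using this
    have hA2 : (a + b) ^ (β - 1) ≤ 2 ^ (β - 1) * a ^ (β - 1) := by
      have h2a : a + b ≤ 2 * a := by linarith
      calc (a + b) ^ (β - 1) ≤ (2 * a) ^ (β - 1) :=
            Real.rpow_le_rpow (by linarith) h2a hβ1
        _ = 2 ^ (β - 1) * a ^ (β - 1) := Real.mul_rpow (by norm_num) ha
    have hβpos : (0 : ℝ) ≤ β := by linarith
    nlinarith [mul_le_mul_of_nonneg_right hA2 hb]
  -- lower bound
  have hlo : a ^ β + b ^ β - t ^ β ≤ β * (a ^ (β - 1) * b) + b ^ (β - 1) * a := by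
    have hab0 : 0 ≤ a - b := by linarith
    have habs : a - b ≤ t := (le_abs_self _).trans h1
    have htβ : (a - b) ^ β ≤ t ^ β := Real.rpow_le_rpow hab0 habs (by linarith)
    have := lemA hab0 (by linarith : a - b ≤ a) hβ
    have h3 : a ^ β - (a - b) ^ β ≤ β * a ^ (β - 1) * b := by
      have h4 : a - (a - b) = b := by ring
      calc a ^ β - (a - b) ^ β ≤ β * a ^ (β - 1) * (a - (a - b)) := this
        _ = β * a ^ (β - 1) * b := by rw [h4]
    nlinarith [hbβa]
  have hPnn : (0:ℝ) ≤ β * 2 ^ (β - 1) :=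
    mul_nonneg (by linarith) (Real.rpow_nonneg (by norm_num) _)
  have hPβ : β ≤ β * 2 ^ (β - 1) := by nlinarith [h2pow]
  rw [abs_le]
  constructor
  · nlinarith [hlo, mul_nonneg (sub_nonneg.mpr hPβ) hA, hA, hB, mul_nonneg hPnn hB]
  · nlinarith [hup, hA, hB, mul_nonneg hPnn hB, mul_nonneg hPnn hA]

private lemma key {a b t β : ℝ} (ha : 0 ≤ a) (hb : 0 ≤ b)
    (h1 : |a - b| ≤ t) (h2 : t ≤ a + b) (hβ : 1 ≤ β) :
    |t ^ β - a ^ β - b ^ β| ≤ (β * 2 ^ (β - 1) + 1) * (a ^ (β - 1) * b + b ^ (β - 1) * a) := by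
  rcases le_total b a with h | h
  · exact keyAux hb h h1 h2 hβ
  · have h1' : |b - a| ≤ t := by rwa [abs_sub_comm]
    have h2' : t ≤ b + a := by linarith
    have := keyAux ha h h1' h2' hβ
    have e1 : t ^ β - b ^ β - a ^ β = t ^ β - a ^ β - b ^ β := by ring
    have e2 : b ^ (β - 1) * a + a ^ (β - 1) * b = a ^ (β - 1) * b + b ^ (β - 1) * a := by ring
    rwa [e1, e2] at this

/-- Let `β ≥ 1`. There exists a constant `C` (depending only on `β`)
such that for any metric space `𝒳` with base point `o` (writing `‖x‖ := dist x o`)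
and any four points `x₁, x₂, x₃, x₄`,
`|d(x₁,x₂)^β − d(x₂,x₃)^β + d(x₃,x₄)^β − d(x₄,x₁)^β|
  ≤ C ∑ᵢ (‖xᵢ‖^{β−1}‖xᵢ₊₁‖ + ‖xᵢ‖^{β−1}‖xᵢ₋₁‖)` (indices mod 4). -/
theorem stmt2.{u} (β : ℝ) (hβ1 : 1 ≤ β) :
    ∃ C : ℝ, ∀ (𝒳 : Type u) [MetricSpace 𝒳] (o x₁ x₂ x₃ x₄ : 𝒳),
      |dist x₁ x₂ ^ β - dist x₂ x₃ ^ β + dist x₃ x₄ ^ β - dist x₄ x₁ ^ β| ≤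
        C * ((dist x₁ o ^ (β - 1) * dist x₂ o + dist x₁ o ^ (β - 1) * dist x₄ o)
          + (dist x₂ o ^ (β - 1) * dist x₃ o + dist x₂ o ^ (β - 1) * dist x₁ o)
          + (dist x₃ o ^ (β - 1) * dist x₄ o + dist x₃ o ^ (β - 1) * dist x₂ o)
          + (dist x₄ o ^ (β - 1) * dist x₁ o + dist x₄ o ^ (β - 1) * dist x₃ o)) := by
  refine ⟨β * 2 ^ (β - 1) + 1, fun 𝒳 _ o x₁ x₂ x₃ x₄ => ?_⟩
  have tri : ∀ x y : 𝒳, |dist x o - dist y o| ≤ dist x y ∧ dist x y ≤ dist x o + dist y o := by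
    intro x y
    refine ⟨abs_dist_sub_le x y o, ?_⟩
    calc dist x y ≤ dist x o + dist o y := dist_triangle x o y
      _ = dist x o + dist y o := by rw [dist_comm o y]
  have h12 := key dist_nonneg dist_nonneg (tri x₁ x₂).1 (tri x₁ x₂).2 hβ1
  have h23 := key dist_nonneg dist_nonneg (tri x₂ x₃).1 (tri x₂ x₃).2 hβ1
  have h34 := key dist_nonneg dist_nonneg (tri x₃ x₄).1 (tri x₃ x₄).2 hβ1
  have h41 := key dist_nonneg dist_nonneg (tri x₄ x₁).1 (tri x₄ x₁).2 hβ1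
  have hC : (β * 2 ^ (β - 1) + 1) *
        ((dist x₁ o ^ (β - 1) * dist x₂ o + dist x₁ o ^ (β - 1) * dist x₄ o)
          + (dist x₂ o ^ (β - 1) * dist x₃ o + dist x₂ o ^ (β - 1) * dist x₁ o)
          + (dist x₃ o ^ (β - 1) * dist x₄ o + dist x₃ o ^ (β - 1) * dist x₂ o)
          + (dist x₄ o ^ (β - 1) * dist x₁ o + dist x₄ o ^ (β - 1) * dist x₃ o)) =
      (β * 2 ^ (β - 1) + 1) * (dist x₁ o ^ (β - 1) * dist x₂ o + dist x₂ o ^ (β - 1) * dist x₁ o)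
      + (β * 2 ^ (β - 1) + 1) * (dist x₂ o ^ (β - 1) * dist x₃ o + dist x₃ o ^ (β - 1) * dist x₂ o)
      + (β * 2 ^ (β - 1) + 1) * (dist x₃ o ^ (β - 1) * dist x₄ o + dist x₄ o ^ (β - 1) * dist x₃ o)
      + (β * 2 ^ (β - 1) + 1) * (dist x₄ o ^ (β - 1) * dist x₁ o + dist x₁ o ^ (β - 1) * dist x₄ o) := by
    ring
  rw [abs_le] at h12 h23 h34 h41 ⊢
  constructor
  · linarith [h12.1, h23.2, h34.1, h41.2, hC]
  · linarith [h12.2, h23.1, h34.2, h41.1, hC]
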